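/- arXiv:2409.06014 — 2 statements merged into one kernel-verified Lean document; each statement's English description precedes it below -/
import Mathlib

section
/- Let X be a finite set of n elements with a tournament relation, partitioned into uncorrupted elements U (nonempty, with the relation restricted to U a strict linear order) and k corrupted elements. Let S be any set of min{n, 2k+1} elements of X with the smallest in-degrees (i.e., every element of S has in-degree at most that of every element outside S). Then S contains the maximum element of U. -/
/-!
The maximum `m` of the uncorrupted elements beats every other uncorrupted element, so only
corrupted elements beat it and its in-degree is at most `k`. Any set `T` of elements of in-degree
at most `k` has at most `2k + 1` elements: the in-degrees inside `T` count each of its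
`|T|(|T| - 1)/2` pairs exactly once, yet each is at most `k`. If `m ∉ S`, every element of `S`
has in-degree at most that of `m`, so `insert m S` would be such a set of `min n (2k + 1) + 1`
elements.
-/

open Finset

namespace Tournament

variable {α : Type*} (r : α → α → Prop) [DecidableRel r]

def inDeg (s : Finset α) (x : α) : ℕ := #{u ∈ s | r u x}

def outDeg (s : Finset α) (x : α) : ℕ := #{u ∈ s | r x u}

variable {r}

theorem inDeg_mono {s t : Finset α} (hst : s ⊆ t) (x : α) : inDeg r s x ≤ inDeg r t x :=
  card_le_card (filter_subset_filter _ hst)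

theorem sum_inDeg_eq_sum_outDeg (s : Finset α) :
    ∑ x ∈ s, inDeg r s x = ∑ x ∈ s, outDeg r s x := by
  simp only [inDeg, outDeg, card_filter]
  exact sum_comm

theorem inDeg_add_outDeg [DecidableEq α] (hirr : ∀ v, ¬ r v v)
    (htour : ∀ u v, u ≠ v → Xor (r u v) (r v u)) {s : Finset α} {x : α} (hx : x ∈ s) :
    inDeg r s x + outDeg r s x = #s - 1 := by
  have hdisj : Disjoint {u ∈ s | r u x} {u ∈ s | r x u} :=
    disjoint_filter.2 fun u _ hux hxu =>
      ((xor_iff_or_and_not_and _ _).1 (htour u x fun h => hirr x (h ▸ hux))).2 ⟨hux, hxu⟩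
  rw [inDeg, outDeg, ← card_union_of_disjoint hdisj, ← card_erase_of_mem hx, ← filter_or]
  congr 1
  ext u
  simp only [mem_filter, mem_erase]
  constructor
  · rintro ⟨hu, hux | hxu⟩
    · exact ⟨fun h => hirr x (h ▸ hux), hu⟩
    · exact ⟨fun h => hirr x (h ▸ hxu), hu⟩
  · rintro ⟨hne, hu⟩
    exact ⟨hu, (htour u x hne).or⟩

theorem two_mul_sum_inDeg (hirr : ∀ v, ¬ r v v)
    (htour : ∀ u v, u ≠ v → Xor (r u v) (r v u)) (s : Finset α) :
    2 * ∑ x ∈ s, inDeg r s x = #s * (#s - 1) := by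
  classical
  calc 2 * ∑ x ∈ s, inDeg r s x
      = ∑ x ∈ s, (inDeg r s x + outDeg r s x) := by
        rw [sum_add_distrib, ← sum_inDeg_eq_sum_outDeg, two_mul]
    _ = ∑ _x ∈ s, (#s - 1) := sum_congr rfl fun x hx => inDeg_add_outDeg hirr htour hx
    _ = #s * (#s - 1) := by rw [sum_const, smul_eq_mul]

theorem card_le_of_forall_inDeg_le (hirr : ∀ v, ¬ r v v)
    (htour : ∀ u v, u ≠ v → Xor (r u v) (r v u)) {s : Finset α} {k : ℕ}
    (hk : ∀ x ∈ s, inDeg r s x ≤ k) : #s ≤ 2 * k + 1 := by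
  have hsum : #s * (#s - 1) ≤ #s * (2 * k) := by
    rw [← two_mul_sum_inDeg hirr htour, mul_left_comm, ← smul_eq_mul (a := #s)]
    exact Nat.mul_le_mul_left 2 (sum_le_card_nsmul s _ k hk)
  rcases Nat.eq_zero_or_pos #s with hs | hs
  · omega
  · have := Nat.le_of_mul_le_mul_left hsum hs
    omega

theorem inDeg_le_card_of_beats_all [Fintype α] {U K : Finset α} (hUK : ∀ x, x ∉ U → x ∈ K)
    (hirr : ∀ v, ¬ r v v) (htour : ∀ u v, u ≠ v → Xor (r u v) (r v u))
    {m : α} (hmax : ∀ x ∈ U, x ≠ m → r m x) : inDeg r univ m ≤ #K := by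
  refine card_le_card fun x hx => hUK x fun hxU => ?_
  have hxm : r x m := (mem_filter.1 hx).2
  have hne : x ≠ m := fun h => hirr m (h ▸ hxm)
  exact ((xor_iff_or_and_not_and _ _).1 (htour x m hne)).2 ⟨hxm, hmax x hxU hne⟩

end Tournament

theorem smallest_indeg_set_contains_max_general {X : Type*} [Fintype X]
    (beats : X → X → Prop) [DecidableRel beats]
    (U K : Finset X)
    (hpart : ∀ x : X, (x ∈ U ∧ x ∉ K) ∨ (x ∈ K ∧ x ∉ U))
    (hirr : ∀ v, ¬ beats v v)
    (htour : ∀ u v : X, u ≠ v → Xor' (beats u v) (beats v u))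
    (m : X) (hmax : ∀ x ∈ U, x ≠ m → beats m x)
    (S : Finset X)
    (hScard : S.card = min (Fintype.card X) (2 * K.card + 1))
    (hSsmall : ∀ x ∈ S, ∀ y ∉ S,
      (Finset.univ.filter (fun u => beats u x)).card ≤
        (Finset.univ.filter (fun u => beats u y)).card) :
    m ∈ S := by
  classical
  by_contra hmS
  have hm : Tournament.inDeg beats univ m ≤ #K :=
    Tournament.inDeg_le_card_of_beats_all
      (fun x hxU => ((hpart x).resolve_left fun h => hxU h.1).1) hirr htour hmax
  have hT : #(insert m S) ≤ 2 * #K + 1 := by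
    refine Tournament.card_le_of_forall_inDeg_le hirr htour fun x hx => ?_
    refine (Tournament.inDeg_mono (subset_univ _) x).trans ?_
    rcases mem_insert.1 hx with rfl | hxS
    · exact hm
    · exact (hSsmall x hxS m hmS).trans hm
  have hTn : #(insert m S) ≤ Fintype.card X := card_le_univ _
  rw [card_insert_of_notMem hmS] at hT hTn
  omega

/-- Any set of `min n (2k+1)` elements with the smallest in-degrees contains the
uncorrupted maximum.  (Lemma 2 of the paper.) -/
theorem smallest_indeg_set_contains_max {X : Type*} [Fintype X] [DecidableEq X]
    (beats : X → X → Prop) [DecidableRel beats]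
    (U K : Finset X)
    (hpart : ∀ x : X, (x ∈ U ∧ x ∉ K) ∨ (x ∈ K ∧ x ∉ U))
    (hirr : ∀ v, ¬ beats v v)
    (htour : ∀ u v : X, u ≠ v → Xor' (beats u v) (beats v u))
    (htrans : ∀ a ∈ U, ∀ b ∈ U, ∀ c ∈ U, beats a b → beats b c → beats a c)
    (m : X) (hm : m ∈ U) (hmax : ∀ x ∈ U, x ≠ m → beats m x)
    (S : Finset X)
    (hScard : S.card = min (Fintype.card X) (2 * K.card + 1))
    (hSsmall : ∀ x ∈ S, ∀ y ∉ S,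
      (Finset.univ.filter (fun u => beats u x)).card ≤
        (Finset.univ.filter (fun u => beats u y)).card) :
    m ∈ S :=
  smallest_indeg_set_contains_max_general beats U K hpart hirr htour m hmax S hScard hSsmall
end

section
/- Let X be a finite tournament on n elements with uncorrupted subset U (relation on U transitive) and k corrupted elements, and let m be the uncorrupted maximum with rank r_m (number of elements of X beating m). For any real d ≥ 0, the number of elements x of X with rank r_x ≤ r_m + d is at most 2k + 1 + d. -/
/-!
The uncorrupted maximum `m` is beaten only by corrupted elements, so `r_m ≤ k`. Within the
transitive set `U` the in-degrees counted inside `U` are pairwise distinct, and for an uncorrupted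
`x` this in-degree is at most `r_x`. Hence at most `⌊k + d⌋₊ + 1` uncorrupted elements have
`r_x ≤ r_m + d`, and at most `k` corrupted ones can be added.
-/

open Finset

namespace Tournament

variable {X : Type*} (beats : X → X → Prop) [DecidableRel beats]

def inDegree (s : Finset X) (x : X) : ℕ := #(s.filter (beats · x))

variable {beats}

theorem inDegree_mono {s t : Finset X} (h : s ⊆ t) (x : X) :
    inDegree beats s x ≤ inDegree beats t x :=
  card_le_card (filter_subset_filter _ h)

theorem inDegree_lt_inDegree {s : Finset X} (hirr : ∀ v, ¬ beats v v)
    (htrans : ∀ a ∈ s, ∀ b ∈ s, ∀ c ∈ s, beats a b → beats b c → beats a c)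
    {x y : X} (hx : x ∈ s) (hy : y ∈ s) (hxy : beats x y) :
    inDegree beats s x < inDegree beats s y := by
  refine card_lt_card ((ssubset_iff_of_subset fun u hu => ?_).2
    ⟨x, mem_filter.2 ⟨hx, hxy⟩, fun h => hirr x (mem_filter.1 h).2⟩)
  rw [mem_filter] at hu ⊢
  exact ⟨hu.1, htrans u hu.1 x hx y hy hu.2 hxy⟩

theorem injOn_inDegree {s : Finset X} (hirr : ∀ v, ¬ beats v v)
    (htotal : ∀ u v, u ≠ v → beats u v ∨ beats v u)
    (htrans : ∀ a ∈ s, ∀ b ∈ s, ∀ c ∈ s, beats a b → beats b c → beats a c) :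
    Set.InjOn (inDegree beats s) s := by
  intro x hx y hy hxy
  by_contra hne
  rcases htotal x y hne with h | h
  · exact (inDegree_lt_inDegree hirr htrans hx hy h).ne hxy
  · exact (inDegree_lt_inDegree hirr htrans hy hx h).ne' hxy

theorem card_filter_inDegree_le {s : Finset X} (hirr : ∀ v, ¬ beats v v)
    (htotal : ∀ u v, u ≠ v → beats u v ∨ beats v u)
    (htrans : ∀ a ∈ s, ∀ b ∈ s, ∀ c ∈ s, beats a b → beats b c → beats a c) (n : ℕ) :
    #(s.filter (inDegree beats s · ≤ n)) ≤ n + 1 := by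
  simpa using card_le_card_of_injOn (t := range (n + 1)) (inDegree beats s)
    (fun x hx => mem_range.2 (Nat.lt_succ_of_le (mem_filter.1 hx).2))
    ((injOn_inDegree hirr htotal htrans).mono (filter_subset _ _))

theorem inDegree_univ_le_card_compl [Fintype X] [DecidableEq X] (hasymm : ∀ u v, beats u v → ¬ beats v u)
    {U : Finset X} {m : X} (hmax : ∀ x ∈ U, x ≠ m → beats m x) :
    inDegree beats univ m ≤ #Uᶜ := by
  refine card_le_card fun u hu => mem_compl.2 fun huU => ?_
  have hum : beats u m := (mem_filter.1 hu).2
  have hne : u ≠ m := by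
    rintro rfl
    exact hasymm u u hum hum
  exact hasymm u m hum (hmax u huU hne)

end Tournament

open Tournament

theorem card_low_rank_le_general {X : Type*} [Fintype X] [DecidableEq X]
    (beats : X → X → Prop) [DecidableRel beats]
    (U K : Finset X)
    (hpart : ∀ x : X, (x ∈ U ∧ x ∉ K) ∨ (x ∈ K ∧ x ∉ U))
    (hirr : ∀ v, ¬ beats v v)
    (htour : ∀ u v : X, u ≠ v → Xor' (beats u v) (beats v u))
    (htrans : ∀ a ∈ U, ∀ b ∈ U, ∀ c ∈ U, beats a b → beats b c → beats a c)
    (m : X) (hmax : ∀ x ∈ U, x ≠ m → beats m x)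
    (d : ℝ) (hd : 0 ≤ d) :
    ((Finset.univ.filter (fun x =>
        ((Finset.univ.filter (fun u => beats u x)).card : ℝ) ≤
          ((Finset.univ.filter (fun u => beats u m)).card : ℝ) + d)).card : ℝ) ≤
      2 * K.card + 1 + d := by
  have hasymm : ∀ u v, beats u v → ¬ beats v u := fun u v huv hvu =>
    ((xor_iff_or_and_not_and _ _).1 (htour u v fun h => hirr u (h ▸ huv))).2 ⟨huv, hvu⟩
  have hcompl : Uᶜ ⊆ K := fun x hx => ((hpart x).resolve_left fun h => mem_compl.1 hx h.1).1
  have hrm : inDegree beats univ m ≤ #K :=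
    (inDegree_univ_le_card_compl hasymm hmax).trans (card_le_card hcompl)
  set S := univ.filter fun x => (inDegree beats univ x : ℝ) ≤ inDegree beats univ m + d
  have hSU : S.filter (· ∈ U) ⊆ U.filter (inDegree beats U · ≤ #K + ⌊d⌋₊) := by
    intro x hx
    obtain ⟨hxS, hxU⟩ := mem_filter.1 hx
    have hxr : (inDegree beats univ x : ℝ) ≤ #K + d :=
      (mem_filter.1 hxS).2.trans (by gcongr)
    have := Nat.le_floor (hxr.trans_eq (add_comm _ _))
    rw [Nat.floor_add_natCast hd, add_comm] at this
    exact mem_filter.2 ⟨hxU, (inDegree_mono (subset_univ U) x).trans this⟩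
  have hSK : S.filter (· ∉ U) ⊆ K := fun x hx => hcompl (mem_compl.2 (mem_filter.1 hx).2)
  have hS : #S ≤ #K + ⌊d⌋₊ + 1 + #K := by
    rw [← card_filter_add_card_filter_not (· ∈ U)]
    exact add_le_add ((card_le_card hSU).trans
      (card_filter_inDegree_le hirr (fun u v h => Xor.or (htour u v h)) htrans _)) (card_le_card hSK)
  have hSr : (#S : ℝ) ≤ #K + ⌊d⌋₊ + 1 + #K := by exact_mod_cast hS
  show (#S : ℝ) ≤ 2 * #K + 1 + d
  linarith [Nat.floor_le hd]

/-- The number of elements whose rank is at most `r_m + d` is at most `2k + 1 + d`,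
where `m` is the uncorrupted maximum and `k` the number of corrupted elements. -/
theorem card_low_rank_le {X : Type*} [Fintype X] [DecidableEq X]
    (beats : X → X → Prop) [DecidableRel beats]
    (U K : Finset X)
    (hpart : ∀ x : X, (x ∈ U ∧ x ∉ K) ∨ (x ∈ K ∧ x ∉ U))
    (hirr : ∀ v, ¬ beats v v)
    (htour : ∀ u v : X, u ≠ v → Xor' (beats u v) (beats v u))
    (htrans : ∀ a ∈ U, ∀ b ∈ U, ∀ c ∈ U, beats a b → beats b c → beats a c)
    (m : X) (hm : m ∈ U) (hmax : ∀ x ∈ U, x ≠ m → beats m x)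
    (d : ℝ) (hd : 0 ≤ d) :
    ((Finset.univ.filter (fun x =>
        ((Finset.univ.filter (fun u => beats u x)).card : ℝ) ≤
          ((Finset.univ.filter (fun u => beats u m)).card : ℝ) + d)).card : ℝ) ≤
      2 * K.card + 1 + d :=
  card_low_rank_le_general beats U K hpart hirr htour htrans m hmax d hd
end
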